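/- arXiv:2105.04008 — 5 statements merged into one kernel-verified Lean document; each statement's English description precedes it below -/
import Mathlib

section
/- Let G be a countable abelian group, H a Hilbert space, and (x_g)_{g ∈ G} a bounded family in H. Let (Φ_N) be a Følner sequence in G. Then for any finite nonempty subset S ⊂ G, limsup_{N→∞} ‖(1/|Φ_N|) ∑_{g ∈ Φ_N} x_g‖² ≤ limsup_{N→∞} (1/|S|²) ∑_{(h,h') ∈ S×S} (1/|Φ_N|) ∑_{g ∈ Φ_N} Re⟨x_{g+h}, x_{g+h'}⟩. -/
/-!
By Følner invariance, the average of `x` over `Φ N` is asymptotically the same as the average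
over `Φ N` of `y g = (1/|S|) ∑_{h ∈ S} x (g + h)`. By Cauchy–Schwarz, the squared norm of the
latter is at most the average of `‖y g‖²`, and expanding `‖y g‖²` into inner products gives the
right-hand side.
-/

open Filter Finset

def IsFolner {G : Type*} [AddCommGroup G] [DecidableEq G] (Φ : ℕ → Finset G) : Prop :=
  (∀ N, (Φ N).Nonempty) ∧
  ∀ g : G, Tendsto
    (fun N => ((symmDiff (Φ N) ((Φ N).image (fun x => g + x))).card : ℝ) / (Φ N).card)
    atTop (nhds 0)

open Topology RCLike

section Averages

variable {ι : Type*}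

lemma inv_card_mul_sum_le {s : Finset ι} {f : ι → ℝ} {C : ℝ} (hC : 0 ≤ C)
    (hf : ∀ i ∈ s, f i ≤ C) : (#s : ℝ)⁻¹ * ∑ i ∈ s, f i ≤ C := by
  rcases s.eq_empty_or_nonempty with rfl | hs
  · simpa using hC
  rw [inv_mul_le_iff₀ (by exact_mod_cast hs.card_pos)]
  simpa using sum_le_card_nsmul s f C hf

variable {𝕜 E : Type*} [RCLike 𝕜] [SeminormedAddCommGroup E]

lemma norm_inv_natCast_smul [NormedSpace 𝕜 E] (n : ℕ) (v : E) :
    ‖(n : 𝕜)⁻¹ • v‖ = (n : ℝ)⁻¹ * ‖v‖ := by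
  rw [norm_smul, norm_inv, RCLike.norm_natCast]

lemma norm_sum_sub_sum_le_mul_card_symmDiff [DecidableEq ι] {x : ι → E} {C : ℝ}
    (hx : ∀ i, ‖x i‖ ≤ C) (s t : Finset ι) :
    ‖∑ i ∈ s, x i - ∑ i ∈ t, x i‖ ≤ C * #(symmDiff s t) := by
  have hcard : (#(symmDiff s t) : ℝ) = #(s \ t) + #(t \ s) := by
    rw [symmDiff_def, sup_eq_union, card_union_of_disjoint disjoint_sdiff_sdiff]
    push_cast; rfl
  rw [← sum_sdiff_sub_sum_sdiff, hcard, mul_add, mul_comm C, mul_comm C]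
  refine (norm_sub_le _ _).trans (add_le_add ?_ ?_) <;>
    simpa using norm_sum_le_of_le _ fun i _ => hx i

lemma norm_average_le [NormedSpace 𝕜 E] {s : Finset ι} {x : ι → E} {C : ℝ} (hC : 0 ≤ C)
    (hx : ∀ i ∈ s, ‖x i‖ ≤ C) : ‖(#s : 𝕜)⁻¹ • ∑ i ∈ s, x i‖ ≤ C := by
  rw [norm_inv_natCast_smul]
  exact (mul_le_mul_of_nonneg_left (norm_sum_le _ _) (by positivity)).trans
    (inv_card_mul_sum_le hC hx)

lemma norm_average_sq_le [NormedSpace 𝕜 E] (s : Finset ι) (x : ι → E) :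
    ‖(#s : 𝕜)⁻¹ • ∑ i ∈ s, x i‖ ^ 2 ≤ (#s : ℝ)⁻¹ * ∑ i ∈ s, ‖x i‖ ^ 2 := by
  have hCS : ‖∑ i ∈ s, x i‖ ^ 2 ≤ #s * ∑ i ∈ s, ‖x i‖ ^ 2 :=
    (pow_le_pow_left₀ (norm_nonneg _) (norm_sum_le _ _) 2).trans sq_sum_le_card_mul_sum_sq
  calc ‖(#s : 𝕜)⁻¹ • ∑ i ∈ s, x i‖ ^ 2 = (#s : ℝ)⁻¹ ^ 2 * ‖∑ i ∈ s, x i‖ ^ 2 := by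
        rw [norm_inv_natCast_smul, mul_pow]
    _ ≤ (#s : ℝ)⁻¹ ^ 2 * (#s * ∑ i ∈ s, ‖x i‖ ^ 2) := by gcongr
    _ = (#s : ℝ)⁻¹ * ∑ i ∈ s, ‖x i‖ ^ 2 := by
        rw [← mul_assoc, sq]
        congr 1
        simpa using mul_self_mul_inv (#s : ℝ)⁻¹

lemma norm_sum_sq_eq_sum_sum_re_inner [InnerProductSpace 𝕜 E] (s : Finset ι) (v : ι → E) :
    ‖∑ i ∈ s, v i‖ ^ 2 = ∑ i ∈ s, ∑ j ∈ s, re (inner 𝕜 (v i) (v j)) := by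
  simp only [norm_sq_eq_re_inner (𝕜 := 𝕜), sum_inner, inner_sum, map_sum]
  exact sum_comm

lemma inv_card_mul_sum_norm_average_sq {κ : Type*} [InnerProductSpace 𝕜 E] (s : Finset ι)
    (t : Finset κ) (v : ι → κ → E) :
    (#s : ℝ)⁻¹ * ∑ i ∈ s, ‖(#t : 𝕜)⁻¹ • ∑ j ∈ t, v i j‖ ^ 2 =
      1 / (#t : ℝ) ^ 2 * ∑ j ∈ t, ∑ k ∈ t, (∑ i ∈ s, re (inner 𝕜 (v i j) (v i k))) / #s := by
  simp only [norm_inv_natCast_smul, mul_pow, norm_sum_sq_eq_sum_sum_re_inner (𝕜 := 𝕜),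
    ← mul_sum, ← sum_div]
  rw [sum_comm, sum_congr rfl fun _ _ => sum_comm]
  ring

end Averages

lemma limsup_add_of_right_tendsto_zero {ι : Type*} {f : Filter ι} [f.NeBot] {u ε : ι → ℝ}
    (hu : IsBoundedUnder (· ≤ ·) f u) (hu' : IsBoundedUnder (· ≥ ·) f u)
    (hε : Tendsto ε f (𝓝 0)) : limsup (u + ε) f = limsup u f := by
  refine le_antisymm ?_ ?_
  · simpa [hε.limsup_eq] using
      limsup_add_le hu' hu hε.isCoboundedUnder_le hε.isBoundedUnder_le
  · simpa [hε.liminf_eq] using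
      le_limsup_add hu hu'.isCoboundedUnder_le hε.isBoundedUnder_le hε.isBoundedUnder_ge

lemma limsup_norm_sq_eq_of_tendsto_sub {ι E : Type*} [SeminormedAddCommGroup E]
    {f : Filter ι} [f.NeBot] {a b : ι → E} {C : ℝ} (ha : ∀ i, ‖a i‖ ≤ C) (hb : ∀ i, ‖b i‖ ≤ C)
    (hab : Tendsto (a - b) f (𝓝 0)) :
    limsup (fun i => ‖a i‖ ^ 2) f = limsup (fun i => ‖b i‖ ^ 2) f := by
  have hdiff : Tendsto (fun i => ‖a i‖ - ‖b i‖) f (𝓝 0) :=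
    squeeze_zero_norm (fun i => abs_norm_sub_norm_le (a i) (b i)) (by simpa using hab.norm)
  have hsum : IsBoundedUnder (· ≤ ·) f (norm ∘ fun i => ‖a i‖ + ‖b i‖) :=
    isBoundedUnder_of ⟨C + C, fun i => by
      simpa [abs_of_nonneg (add_nonneg (norm_nonneg (a i)) (norm_nonneg (b i)))]
        using add_le_add (ha i) (hb i)⟩
  have hsq : Tendsto (fun i => ‖a i‖ ^ 2 - ‖b i‖ ^ 2) f (𝓝 0) := by
    refine (hdiff.zero_mul_isBoundedUnder_le hsum).congr fun i => ?_
    ring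
  have hb_sq : IsBoundedUnder (· ≤ ·) f fun i => ‖b i‖ ^ 2 :=
    isBoundedUnder_of ⟨C ^ 2, fun i => pow_le_pow_left₀ (norm_nonneg _) (hb i) 2⟩
  calc limsup (fun i => ‖a i‖ ^ 2) f
      = limsup ((fun i => ‖b i‖ ^ 2) + fun i => ‖a i‖ ^ 2 - ‖b i‖ ^ 2) f := by
        simp only [Pi.add_def, add_sub_cancel]
    _ = limsup (fun i => ‖b i‖ ^ 2) f :=
      limsup_add_of_right_tendsto_zero hb_sq (isBoundedUnder_of ⟨0, fun i => sq_nonneg _⟩) hsq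

section Folner

variable {G 𝕜 E : Type*} [AddCommGroup G] [DecidableEq G] [RCLike 𝕜]
  [SeminormedAddCommGroup E] [NormedSpace 𝕜 E] {Φ : ℕ → Finset G} {x : G → E} {C : ℝ}

lemma IsFolner.tendsto_average_sub_average_add (hΦ : IsFolner Φ) (hx : ∀ g, ‖x g‖ ≤ C)
    (h : G) :
    Tendsto (fun N => (#(Φ N) : 𝕜)⁻¹ • ∑ g ∈ Φ N, x g - (#(Φ N) : 𝕜)⁻¹ • ∑ g ∈ Φ N, x (g + h))
      atTop (𝓝 0) := by
  have hshift : ∀ N, ∑ g ∈ Φ N, x (g + h) = ∑ g ∈ (Φ N).image (h + ·), x g := fun N => by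
    rw [sum_image fun _ _ _ _ => add_left_cancel]
    simp_rw [add_comm h]
  refine squeeze_zero_norm (fun N => ?_) (by simpa only [mul_zero] using (hΦ.2 h).const_mul C)
  rw [← smul_sub, norm_inv_natCast_smul, hshift]
  calc (#(Φ N) : ℝ)⁻¹ * ‖∑ g ∈ Φ N, x g - ∑ g ∈ (Φ N).image (h + ·), x g‖
      ≤ (#(Φ N) : ℝ)⁻¹ * (C * #(symmDiff (Φ N) ((Φ N).image (h + ·)))) := by
        gcongr
        exact norm_sum_sub_sum_le_mul_card_symmDiff hx _ _
    _ = C * (#(symmDiff (Φ N) ((Φ N).image (h + ·))) / #(Φ N)) := by ring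

lemma IsFolner.tendsto_average_sub_average_average_add (hΦ : IsFolner Φ)
    (hx : ∀ g, ‖x g‖ ≤ C) {S : Finset G} (hS : S.Nonempty) :
    Tendsto (fun N => (#(Φ N) : 𝕜)⁻¹ • ∑ g ∈ Φ N, x g -
      (#(Φ N) : 𝕜)⁻¹ • ∑ g ∈ Φ N, (#S : 𝕜)⁻¹ • ∑ h ∈ S, x (g + h)) atTop (𝓝 0) := by
  have hS' : (#S : 𝕜) ≠ 0 := by simpa using hS.card_pos.ne'
  have hdecomp : ∀ N, (#(Φ N) : 𝕜)⁻¹ • ∑ g ∈ Φ N, x g -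
      (#(Φ N) : 𝕜)⁻¹ • ∑ g ∈ Φ N, (#S : 𝕜)⁻¹ • ∑ h ∈ S, x (g + h) =
      (#S : 𝕜)⁻¹ • ∑ h ∈ S, ((#(Φ N) : 𝕜)⁻¹ • ∑ g ∈ Φ N, x g -
        (#(Φ N) : 𝕜)⁻¹ • ∑ g ∈ Φ N, x (g + h)) := fun N => by
    rw [sum_sub_distrib, sum_const, smul_sub, ← Nat.cast_smul_eq_nsmul 𝕜, smul_smul,
      inv_mul_cancel₀ hS', one_smul, ← smul_sum, ← smul_sum, smul_comm, sum_comm]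
  refine Tendsto.congr (fun N => (hdecomp N).symm) ?_
  simpa using (tendsto_finsetSum S fun h _ =>
    hΦ.tendsto_average_sub_average_add (𝕜 := 𝕜) hx h).const_smul (#S : 𝕜)⁻¹

end Folner

theorem stmt2_general {G : Type*} [AddCommGroup G] [DecidableEq G]
    {H : Type*} [NormedAddCommGroup H] [InnerProductSpace ℂ H]
    (x : G → H) (C : ℝ) (hbdd : ∀ g, ‖x g‖ ≤ C)
    (Φ : ℕ → Finset G) (hΦ : IsFolner Φ)
    (S : Finset G) (hS : S.Nonempty) :
    limsup (fun N => ‖(((Φ N).card : ℂ))⁻¹ • ∑ g ∈ Φ N, x g‖ ^ 2) atTop ≤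
      limsup (fun N => (1 / (S.card : ℝ) ^ 2) * ∑ h ∈ S, ∑ h' ∈ S,
        (∑ g ∈ Φ N, ((inner ℂ (x (g + h)) (x (g + h')) : ℂ)).re) / (Φ N).card) atTop := by
  have hC : 0 ≤ C := (norm_nonneg _).trans (hbdd 0)
  set y : G → H := fun g => (#S : ℂ)⁻¹ • ∑ h ∈ S, x (g + h)
  have hy : ∀ g, ‖y g‖ ≤ C := fun g => norm_average_le hC fun h _ => hbdd (g + h)
  calc limsup (fun N => ‖(#(Φ N) : ℂ)⁻¹ • ∑ g ∈ Φ N, x g‖ ^ 2) atTop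
      = limsup (fun N => ‖(#(Φ N) : ℂ)⁻¹ • ∑ g ∈ Φ N, y g‖ ^ 2) atTop :=
        limsup_norm_sq_eq_of_tendsto_sub (fun N => norm_average_le hC fun g _ => hbdd g)
          (fun N => norm_average_le hC fun g _ => hy g)
          (hΦ.tendsto_average_sub_average_average_add hbdd hS)
    _ ≤ limsup (fun N => (#(Φ N) : ℝ)⁻¹ * ∑ g ∈ Φ N, ‖y g‖ ^ 2) atTop :=
        limsup_le_limsup (.of_forall fun N => norm_average_sq_le _ _)
          (isCoboundedUnder_le_of_le atTop fun N => sq_nonneg _)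
          (isBoundedUnder_of ⟨C ^ 2, fun N => inv_card_mul_sum_le (sq_nonneg C)
            fun g _ => pow_le_pow_left₀ (norm_nonneg _) (hy g) 2⟩)
    _ = _ := by
        congr 1
        ext N
        exact inv_card_mul_sum_norm_average_sq (Φ N) S fun g h => x (g + h)

/-- Finitary van der Corput inequality: for a bounded family `(x_g)` in a Hilbert space
indexed by a countable abelian group with Følner sequence `(Φ_N)` and any finite nonempty
`S ⊆ G`,
`limsup_N ‖E_{g∈Φ_N} x_g‖² ≤ limsup_N E_{(h,h')∈S²} E_{g∈Φ_N} Re⟨x_{g+h}, x_{g+h'}⟩`. -/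
theorem stmt2 {G : Type*} [AddCommGroup G] [Countable G] [DecidableEq G]
    {H : Type*} [NormedAddCommGroup H] [InnerProductSpace ℂ H] [CompleteSpace H]
    (x : G → H) (C : ℝ) (hbdd : ∀ g, ‖x g‖ ≤ C)
    (Φ : ℕ → Finset G) (hΦ : IsFolner Φ)
    (S : Finset G) (hS : S.Nonempty) :
    limsup (fun N => ‖(((Φ N).card : ℂ))⁻¹ • ∑ g ∈ Φ N, x g‖ ^ 2) atTop ≤
      limsup (fun N => (1 / (S.card : ℝ) ^ 2) * ∑ h ∈ S, ∑ h' ∈ S,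
        (∑ g ∈ Φ N, ((inner ℂ (x (g + h)) (x (g + h')) : ℂ)).re) / (Φ N).card) atTop :=
  stmt2_general x C hbdd Φ hΦ S hS
end

section
/- Let G be a countable abelian group acting on a Hilbert space H by unitary operators U_g satisfying U_g ∘ U_h = U_{g+h}. Then for any f ∈ H and any Følner sequence (Φ_N) in G, the averages (1/|Φ_N|) ∑_{g ∈ Φ_N} U_g f converge in norm to P f, where P is the orthogonal projection onto the subspace of vectors invariant under all U_g. -/
open Filter Finset

/-!
Write `f = Pf + w` with `Pf` the projection onto the invariant vectors; the averages fix `Pf`.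
A vector `z` orthogonal to every coboundary `U g y - y` is invariant, since `⟪U g z, z⟫ = ‖z‖²`
forces the isometric image `U g z` to be `z`; hence `w` lies in the closed span of the
coboundaries. On a coboundary `U h y - y` the average telescopes to a sum over
`Φ N ∆ (h + Φ N)`, which is `o(#Φ N)` by the Følner property. As all averages have norm at
most `1`, the vectors whose averages tend to `0` form a closed subspace, so it contains `w`.
-/

open scoped Topology

section TendstoZero

variable {𝕜 α E F : Type*} [NontriviallyNormedField 𝕜] [NormedAddCommGroup E] [NormedSpace 𝕜 E]
  [NormedAddCommGroup F] [NormedSpace 𝕜 F]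

def tendstoZeroSubmodule (A : α → E →L[𝕜] F) (l : Filter α) : Submodule 𝕜 E where
  carrier := {x | Tendsto (A · x) l (𝓝 0)}
  add_mem' {x y} hx hy := by simpa using hx.add hy
  zero_mem' := by simpa using tendsto_const_nhds
  smul_mem' c x hx := by simpa using hx.const_smul c

theorem isClosed_tendstoZeroSubmodule {A : α → E →L[𝕜] F} {C : ℝ} (hA : ∀ a, ‖A a‖ ≤ C)
    (l : Filter α) : IsClosed (tendstoZeroSubmodule A l : Set E) :=
  have hequi : Equicontinuous ((↑) ∘ A : α → E → F) :=
    ((NormedSpace.equicontinuous_TFAE A).out 5 1).mp (by exact ⟨C, hA⟩)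
  hequi.isClosed_setOfPred_tendsto continuous_const

end TendstoZero

theorem norm_sum_sub_sum_le_card_symmDiff_mul {ι E : Type*} [DecidableEq ι]
    [SeminormedAddCommGroup E] {s t : Finset ι} {f : ι → E} {C : ℝ} (hf : ∀ i, ‖f i‖ ≤ C) :
    ‖∑ i ∈ t, f i - ∑ i ∈ s, f i‖ ≤ #(symmDiff s t) * C := by
  rw [← sum_sdiff_sub_sum_sdiff, symmDiff_def, sup_eq_union,
    card_union_of_disjoint disjoint_sdiff_sdiff, Nat.cast_add, add_comm, add_mul]
  calc ‖∑ i ∈ t \ s, f i - ∑ i ∈ s \ t, f i‖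
      ≤ ‖∑ i ∈ t \ s, f i‖ + ‖∑ i ∈ s \ t, f i‖ := norm_sub_le _ _
    _ ≤ #(t \ s) * C + #(s \ t) * C := by
      gcongr <;> exact (norm_sum_le_of_le _ fun i _ ↦ hf i).trans_eq (by simp)

section Action

variable {𝕜 G E : Type*} [RCLike 𝕜] [NormedAddCommGroup E] [NormedSpace 𝕜 E]

def invariantSubmodule (U : G → E ≃ₗᵢ[𝕜] E) : Submodule 𝕜 E where
  carrier := {x | ∀ g, U g x = x}
  add_mem' hx hy g := by simp [hx g, hy g]
  zero_mem' g := map_zero (U g)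
  smul_mem' c x hx g := by simp [hx g]

theorem isClosed_invariantSubmodule (U : G → E ≃ₗᵢ[𝕜] E) :
    IsClosed (invariantSubmodule U : Set E) := by
  simp only [invariantSubmodule, Submodule.coe_set_mk, AddSubmonoid.coe_set_mk,
    AddSubsemigroup.coe_set_mk, Set.ofPred_forall]
  exact isClosed_iInter fun g ↦ isClosed_eq (U g).continuous continuous_id

def coboundarySubmodule (U : G → E ≃ₗᵢ[𝕜] E) : Submodule 𝕜 E :=
  ⨆ g, LinearMap.range ((U g).toLinearEquiv.toLinearMap - LinearMap.id)

theorem sub_mem_coboundarySubmodule (U : G → E ≃ₗᵢ[𝕜] E) (g : G) (y : E) :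
    U g y - y ∈ coboundarySubmodule U :=
  Submodule.mem_iSup_of_mem g ⟨y, rfl⟩

def groupAverage (U : G → E ≃ₗᵢ[𝕜] E) (s : Finset G) : E →L[𝕜] E :=
  (#s : 𝕜)⁻¹ • ∑ g ∈ s, (U g).toLinearIsometry.toContinuousLinearMap

theorem groupAverage_apply (U : G → E ≃ₗᵢ[𝕜] E) (s : Finset G) (x : E) :
    groupAverage U s x = (#s : 𝕜)⁻¹ • ∑ g ∈ s, U g x := by
  simp [groupAverage]

theorem norm_groupAverage_le_one (U : G → E ≃ₗᵢ[𝕜] E) (s : Finset G) :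
    ‖groupAverage U s‖ ≤ 1 := by
  calc ‖groupAverage U s‖
      ≤ ‖(#s : 𝕜)⁻¹‖ * ‖∑ g ∈ s, (U g).toLinearIsometry.toContinuousLinearMap‖ :=
        norm_smul_le (#s : 𝕜)⁻¹ (∑ g ∈ s, (U g).toLinearIsometry.toContinuousLinearMap)
    _ ≤ (#s : ℝ)⁻¹ * #s := by
        gcongr
        · simp
        · exact (norm_sum_le_of_le _ fun g _ ↦
            LinearIsometry.norm_toContinuousLinearMap_le _).trans_eq (by simp)
    _ ≤ 1 := inv_mul_le_one_of_le₀ le_rfl (Nat.cast_nonneg _)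

theorem groupAverage_apply_of_mem_invariantSubmodule {U : G → E ≃ₗᵢ[𝕜] E} {s : Finset G}
    (hs : s.Nonempty) {x : E} (hx : x ∈ invariantSubmodule U) : groupAverage U s x = x := by
  have : (#s : 𝕜) ≠ 0 := by exact_mod_cast hs.card_pos.ne'
  rw [groupAverage_apply, sum_congr rfl fun g _ ↦ hx g, sum_const, ← Nat.cast_smul_eq_nsmul 𝕜,
    smul_smul, inv_mul_cancel₀ this, one_smul]

end Action

theorem orthogonal_coboundarySubmodule_le_invariantSubmodule {𝕜 G E : Type*} [RCLike 𝕜]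
    [NormedAddCommGroup E] [InnerProductSpace 𝕜 E] (U : G → E ≃ₗᵢ[𝕜] E) :
    (coboundarySubmodule U)ᗮ ≤ invariantSubmodule U := by
  intro z hz g
  have hinner : inner 𝕜 (U g z - z) z = 0 :=
    Submodule.inner_right_of_mem_orthogonal (sub_mem_coboundarySubmodule U g z) hz
  refine eq_of_norm_le_re_inner_eq_norm_sq (𝕜 := 𝕜) (by simp) ?_
  rw [inner_sub_left, sub_eq_zero] at hinner
  simp [hinner]

section Folner

variable {𝕜 G E : Type*} [RCLike 𝕜] [AddCommGroup G] [DecidableEq G] [NormedAddCommGroup E]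
  [NormedSpace 𝕜 E] {U : G → E ≃ₗᵢ[𝕜] E}

theorem groupAverage_apply_sub (hU : ∀ g h x, U (g + h) x = U g (U h x)) (s : Finset G) (h : G)
    (y : E) : groupAverage U s (U h y - y) =
      (#s : 𝕜)⁻¹ • (∑ g ∈ s.image (h + ·), U g y - ∑ g ∈ s, U g y) := by
  rw [groupAverage_apply, sum_image fun _ _ _ _ ↦ add_left_cancel]
  simp_rw [map_sub, sum_sub_distrib, ← hU, add_comm]

theorem norm_groupAverage_apply_sub_le (hU : ∀ g h x, U (g + h) x = U g (U h x))
    (s : Finset G) (h : G) (y : E) :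
    ‖groupAverage U s (U h y - y)‖ ≤ #(symmDiff s (s.image (h + ·))) / #s * ‖y‖ := by
  rw [groupAverage_apply_sub hU, norm_smul, norm_inv, RCLike.norm_natCast, div_mul_eq_mul_div,
    inv_mul_eq_div]
  gcongr
  exact norm_sum_sub_sum_le_card_symmDiff_mul fun g ↦ (U g).norm_map y |>.le

theorem tendsto_groupAverage_apply_sub (hU : ∀ g h x, U (g + h) x = U g (U h x))
    {Φ : ℕ → Finset G} (hΦ : IsFolner Φ) (h : G) (y : E) :
    Tendsto (fun N ↦ groupAverage U (Φ N) (U h y - y)) atTop (𝓝 0) :=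
  squeeze_zero_norm (fun N ↦ norm_groupAverage_apply_sub_le hU (Φ N) h y)
    (by simpa using (hΦ.2 h).mul_const ‖y‖)

theorem coboundarySubmodule_le_tendstoZeroSubmodule (hU : ∀ g h x, U (g + h) x = U g (U h x))
    {Φ : ℕ → Finset G} (hΦ : IsFolner Φ) :
    coboundarySubmodule U ≤ tendstoZeroSubmodule (fun N ↦ groupAverage U (Φ N)) atTop :=
  iSup_le fun h ↦ by
    rintro _ ⟨y, rfl⟩
    exact tendsto_groupAverage_apply_sub hU hΦ h y

end Folner

theorem tendsto_groupAverage_of_mem_orthogonal {𝕜 G E : Type*} [RCLike 𝕜] [AddCommGroup G]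
    [DecidableEq G] [NormedAddCommGroup E] [InnerProductSpace 𝕜 E] [CompleteSpace E]
    {U : G → E ≃ₗᵢ[𝕜] E} (hU : ∀ g h x, U (g + h) x = U g (U h x)) {Φ : ℕ → Finset G}
    (hΦ : IsFolner Φ) {w : E} (hw : w ∈ (invariantSubmodule U)ᗮ) :
    Tendsto (fun N ↦ groupAverage U (Φ N) w) atTop (𝓝 0) := by
  have hcob : w ∈ (coboundarySubmodule U).topologicalClosure := by
    rw [← Submodule.orthogonal_orthogonal_eq_closure]
    exact Submodule.orthogonal_le (orthogonal_coboundarySubmodule_le_invariantSubmodule U) hw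
  exact Submodule.topologicalClosure_minimal _ (coboundarySubmodule_le_tendstoZeroSubmodule hU hΦ)
    (isClosed_tendstoZeroSubmodule (fun N ↦ norm_groupAverage_le_one U (Φ N)) atTop) hcob

theorem stmt3_general {G : Type*} [AddCommGroup G] [DecidableEq G]
    {H : Type*} [NormedAddCommGroup H] [InnerProductSpace ℂ H] [CompleteSpace H]
    (U : G → H ≃ₗᵢ[ℂ] H) (hU : ∀ g h x, U (g + h) x = U g (U h x))
    (f : H) (Φ : ℕ → Finset G) (hΦ : IsFolner Φ) :
    ∃ Pf : H, (∀ g, U g Pf = Pf) ∧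
      (∀ z : H, (∀ g, U g z = z) → (inner ℂ (f - Pf) z : ℂ) = 0) ∧
      Tendsto (fun N => (((Φ N).card : ℂ))⁻¹ • ∑ g ∈ Φ N, U g f) atTop (nhds Pf) := by
  set S := invariantSubmodule U
  have : CompleteSpace S := (isClosed_invariantSubmodule U).completeSpace_coe
  set Pf := S.starProjection f
  have hPf : Pf ∈ S := S.starProjection_apply_mem f
  have hperp : f - Pf ∈ Sᗮ := S.sub_starProjection_mem_orthogonal f
  refine ⟨Pf, hPf, fun z hz ↦ Submodule.inner_left_of_mem_orthogonal (show z ∈ S from hz) hperp, ?_⟩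
  have hsplit : ∀ N, groupAverage U (Φ N) f = Pf + groupAverage U (Φ N) (f - Pf) := fun N ↦ by
    rw [map_sub, groupAverage_apply_of_mem_invariantSubmodule (hΦ.1 N) hPf, add_sub_cancel]
  simp_rw [← groupAverage_apply, hsplit]
  simpa only [add_zero] using
    (tendsto_const_nhds (x := Pf)).add (tendsto_groupAverage_of_mem_orthogonal hU hΦ hperp)

/-- Mean ergodic theorem for unitary actions of countable abelian groups: the Følner
averages `E_{g∈Φ_N} U_g f` converge in norm to the orthogonal projection of `f` onto
the subspace of invariant vectors (characterized by being invariant and having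
`f - Pf` orthogonal to every invariant vector). -/
theorem stmt3 {G : Type*} [AddCommGroup G] [Countable G] [DecidableEq G]
    {H : Type*} [NormedAddCommGroup H] [InnerProductSpace ℂ H] [CompleteSpace H]
    (U : G → H ≃ₗᵢ[ℂ] H) (hU : ∀ g h x, U (g + h) x = U g (U h x))
    (f : H) (Φ : ℕ → Finset G) (hΦ : IsFolner Φ) :
    ∃ Pf : H, (∀ g, U g Pf = Pf) ∧
      (∀ z : H, (∀ g, U g z = z) → (inner ℂ (f - Pf) z : ℂ) = 0) ∧
      Tendsto (fun N => (((Φ N).card : ℂ))⁻¹ • ∑ g ∈ Φ N, U g f) atTop (nhds Pf) :=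
  stmt3_general U hU f Φ hΦ
end

section
/- Let F be a countable field of characteristic zero, let χ ∈ Hom(F, S¹) be a non-trivial character of the additive group, let p ∈ F[x] be a non-constant polynomial, and let (Φ_N) be a Følner sequence in (F,+). Then (1/|Φ_N|) ∑_{n ∈ Φ_N} χ(p(n)) → 0 as N → ∞. -/
/-!
Averages of a bounded function along a Følner sequence are asymptotically invariant under
shifts. For linear `p`, shifting `n` by a suitable `g` multiplies `χ (p n)` by `χ g ≠ 1`, so the
averages tend to `0`. For `deg p ≥ 2`, van der Corput's inequality bounds the averages of
`u n = χ (p n)` by those of the correlations `u (n + h) * conj (u (n + h')) = χ (q n)` with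
`q x = p (x + h) - p (x + h')`; in characteristic zero `q` has degree `deg p - 1 ≥ 1` when
`h ≠ h'`, so induction on the degree applies.
-/

open Filter Finset

open Topology ComplexConjugate
open scoped BigOperators

lemma norm_sum_sub_sum_le_card_symmDiff {ι E : Type*} [DecidableEq ι] [SeminormedAddCommGroup E]
    {f : ι → E} (hf : ∀ x, ‖f x‖ ≤ 1) (A B : Finset ι) :
    ‖∑ x ∈ A, f x - ∑ x ∈ B, f x‖ ≤ #(symmDiff A B) := by
  have hcard : ∀ C : Finset ι, ‖∑ x ∈ C, f x‖ ≤ #C := fun C => by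
    simpa using norm_sum_le_of_le C fun x _ => hf x
  rw [← sum_sdiff_sub_sum_sdiff, Finset.symmDiff_def, card_union_of_disjoint disjoint_sdiff_sdiff,
    Nat.cast_add]
  exact (norm_sub_le _ _).trans (add_le_add (hcard _) (hcard _))

lemma sq_norm_expect_sum_le {ι κ : Type*} {s : Finset ι} (hs : s.Nonempty) (H : Finset κ)
    (v : κ → ι → ℂ) :
    ‖𝔼 n ∈ s, ∑ h ∈ H, v h n‖ ^ 2 ≤ ∑ h ∈ H, ∑ h' ∈ H, ‖𝔼 n ∈ s, v h n * conj (v h' n)‖ := by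
  set V := fun n => ∑ h ∈ H, v h n
  have hcs : ‖𝔼 n ∈ s, V n‖ ^ 2 ≤ 𝔼 n ∈ s, ‖V n‖ ^ 2 := by
    calc _ ≤ (𝔼 n ∈ s, ‖V n‖) ^ 2 := by gcongr; exact RCLike.norm_expect_le (K := ℂ)
    _ ≤ (𝔼 _n ∈ s, (1 : ℝ) ^ 2) * 𝔼 n ∈ s, ‖V n‖ ^ 2 := by
      simpa using expect_mul_sq_le_sq_mul_sq s (fun _ => (1 : ℝ)) fun n => ‖V n‖
    _ = _ := by simp [expect_const hs]
  have hexpand : ((𝔼 n ∈ s, ‖V n‖ ^ 2 : ℝ) : ℂ) =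
      ∑ h ∈ H, ∑ h' ∈ H, 𝔼 n ∈ s, v h n * conj (v h' n) := by
    simp_rw [Complex.ofReal_expect, Complex.ofReal_pow, ← Complex.mul_conj', V, map_sum,
      sum_mul_sum, expect_sum_comm]
  calc _ ≤ _ := hcs
  _ = ‖((𝔼 n ∈ s, ‖V n‖ ^ 2 : ℝ) : ℂ)‖ := by
    rw [Complex.norm_real, Real.norm_of_nonneg (expect_nonneg fun _ _ => by positivity)]
  _ ≤ _ := by
    rw [hexpand]
    exact (norm_sum_le _ _).trans (sum_le_sum fun h _ => norm_sum_le _ _)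

lemma sq_norm_expect_sum_shift_le {G : Type*} [AddCommMonoid G] [DecidableEq G] {u : G → ℂ}
    (hu : ∀ x, ‖u x‖ ≤ 1) {s : Finset G} (hs : s.Nonempty) (H : Finset G) :
    ‖𝔼 n ∈ s, ∑ h ∈ H, u (n + h)‖ ^ 2 ≤
      #H + ∑ h ∈ H, ∑ h' ∈ H.erase h, ‖𝔼 n ∈ s, u (n + h) * conj (u (n + h'))‖ := by
  have hdiag : ∀ h, ‖𝔼 n ∈ s, u (n + h) * conj (u (n + h))‖ ≤ 1 := fun h =>
    (RCLike.norm_expect_le (K := ℂ)).trans <| expect_le hs fun n _ => by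
      rw [norm_mul, Complex.norm_conj]
      exact mul_le_one₀ (hu _) (norm_nonneg _) (hu _)
  refine (sq_norm_expect_sum_le hs H fun h n => u (n + h)).trans ?_
  rw [sum_congr rfl fun h hh => (add_sum_erase H _ hh).symm, sum_add_distrib]
  gcongr
  simpa using sum_le_sum fun h (_ : h ∈ H) => hdiag h

namespace IsFolner

variable {G : Type*} [AddCommGroup G] [DecidableEq G] {Φ : ℕ → Finset G}

lemma tendsto_expect_shift_sub (hΦ : IsFolner Φ) {u : G → ℂ} (hu : ∀ x, ‖u x‖ ≤ 1) (h : G) :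
    Tendsto (fun N => 𝔼 n ∈ Φ N, u (n + h) - 𝔼 n ∈ Φ N, u n) atTop (𝓝 0) := by
  refine squeeze_zero_norm (fun N => ?_) (hΦ.2 h)
  have hshift : ∑ n ∈ Φ N, u (n + h) = ∑ m ∈ (Φ N).image (h + ·), u m := by
    rw [sum_image fun x _ y _ hxy => add_left_cancel hxy]
    simp only [add_comm]
  rw [expect_eq_sum_div_card, expect_eq_sum_div_card, ← sub_div, norm_div, Complex.norm_natCast,
    hshift, symmDiff_comm]
  gcongr
  exact norm_sum_sub_sum_le_card_symmDiff hu _ _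

lemma tendsto_expect_of_shift_eq_mul (hΦ : IsFolner Φ) {u : G → ℂ} (hu : ∀ x, ‖u x‖ ≤ 1) {g : G}
    {c : ℂ} (hc : c ≠ 1) (hshift : ∀ x, u (x + g) = c * u x) :
    Tendsto (fun N => 𝔼 n ∈ Φ N, u n) atTop (𝓝 0) := by
  have hc' : c - 1 ≠ 0 := sub_ne_zero.2 hc
  have hexpect : ∀ N,
      (c - 1)⁻¹ * (𝔼 n ∈ Φ N, u (n + g) - 𝔼 n ∈ Φ N, u n) = 𝔼 n ∈ Φ N, u n := fun N => by
    simp only [hshift, ← mul_expect]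
    field_simp
  simpa only [mul_zero, hexpect] using (hΦ.tendsto_expect_shift_sub hu g).const_mul (c - 1)⁻¹

lemma eventually_norm_expect_lt (hΦ : IsFolner Φ) {u : G → ℂ} (hu : ∀ x, ‖u x‖ ≤ 1)
    (hcorr : ∀ h h', h ≠ h' →
      Tendsto (fun N => 𝔼 n ∈ Φ N, u (n + h) * conj (u (n + h'))) atTop (𝓝 0))
    {ε : ℝ} (hε : 0 < ε) {H : Finset G} (hH : 1 < ε ^ 2 * #H) :
    ∀ᶠ N in atTop, ‖𝔼 n ∈ Φ N, u n‖ < ε := by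
  set k : ℝ := (#H : ℝ)
  have hk : 0 < k := pos_of_mul_pos_right (one_pos.trans hH) (sq_nonneg ε)
  set C := fun N => ∑ h ∈ H, ∑ h' ∈ H.erase h, ‖𝔼 n ∈ Φ N, u (n + h) * conj (u (n + h'))‖
  set E := fun N => ∑ h ∈ H, (𝔼 n ∈ Φ N, u (n + h) - 𝔼 n ∈ Φ N, u n)
  have hC : Tendsto C atTop (𝓝 0) := by
    simpa using tendsto_finsetSum H fun h _ => tendsto_finsetSum (H.erase h) fun h' hh' =>
      (hcorr h h' (ne_of_mem_erase hh').symm).norm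
  have hE : Tendsto E atTop (𝓝 0) := by
    simpa only [sum_const_zero] using
      tendsto_finsetSum (f := fun h N => 𝔼 n ∈ Φ N, u (n + h) - 𝔼 n ∈ Φ N, u n) H
        fun h _ => hΦ.tendsto_expect_shift_sub hu h
  have hbound : ∀ N, k * ‖𝔼 n ∈ Φ N, u n‖ ≤ √(k + C N) + ‖E N‖ := fun N => by
    have hsplit : (k : ℂ) * 𝔼 n ∈ Φ N, u n = 𝔼 n ∈ Φ N, ∑ h ∈ H, u (n + h) - E N := by
      simp [E, expect_sum_comm, sum_sub_distrib, k]
    have hsq := Real.le_sqrt_of_sq_le (sq_norm_expect_sum_shift_le hu (hΦ.1 N) H)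
    calc k * ‖𝔼 n ∈ Φ N, u n‖ = ‖(k : ℂ) * 𝔼 n ∈ Φ N, u n‖ := by
          rw [norm_mul, Complex.norm_real, Real.norm_of_nonneg hk.le]
    _ ≤ ‖𝔼 n ∈ Φ N, ∑ h ∈ H, u (n + h)‖ + ‖E N‖ := by rw [hsplit]; exact norm_sub_le _ _
    _ ≤ √(k + C N) + ‖E N‖ := by gcongr
  have hlim : Tendsto (fun N => √(k + C N) + ‖E N‖) atTop (𝓝 (√k)) := by
    simpa using ((tendsto_const_nhds.add hC).sqrt).add hE.norm
  have hsqrt : √k < k * ε := by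
    rw [Real.sqrt_lt' (by positivity)]
    nlinarith
  filter_upwards [hlim.eventually_lt_const hsqrt] with N hN
  exact lt_of_mul_lt_mul_left ((hbound N).trans_lt hN) hk.le

theorem tendsto_expect_of_tendsto_expect_mul_conj [Infinite G] (hΦ : IsFolner Φ) {u : G → ℂ}
    (hu : ∀ x, ‖u x‖ ≤ 1)
    (hcorr : ∀ h h', h ≠ h' →
      Tendsto (fun N => 𝔼 n ∈ Φ N, u (n + h) * conj (u (n + h'))) atTop (𝓝 0)) :
    Tendsto (fun N => 𝔼 n ∈ Φ N, u n) atTop (𝓝 0) := by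
  refine Metric.tendsto_nhds.2 fun ε hε => ?_
  obtain ⟨k, hk⟩ := exists_nat_gt (1 / ε ^ 2)
  obtain ⟨H, rfl⟩ := Infinite.exists_subset_card_eq G k
  simpa only [dist_zero_right] using
    hΦ.eventually_norm_expect_lt hu hcorr hε (by rwa [div_lt_iff₀' (by positivity)] at hk)

end IsFolner

namespace Polynomial

variable {R : Type*} [CommRing R]

lemma coeff_taylor_sub_self_of_natDegree_eq {p : R[X]} {n : ℕ} (hp : p.natDegree = n + 1)
    (c : R) : (taylor c p - p).coeff n = (n + 1) * p.leadingCoeff * c := by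
  have hle : (hasseDeriv n p).natDegree ≤ 1 := (natDegree_hasseDeriv_le p n).trans (by omega)
  rw [coeff_sub, taylor_coeff, eq_X_add_C_of_natDegree_le_one hle]
  simp [hasseDeriv_coeff, leadingCoeff, hp, add_comm 1 n]

variable [IsDomain R] [CharZero R]

lemma natDegree_taylor_sub_self {p : R[X]} {n : ℕ} (hp : p.natDegree = n + 1) {c : R}
    (hc : c ≠ 0) : (taylor c p - p).natDegree = n := by
  have hp0 : p ≠ 0 := ne_zero_of_natDegree_gt (n := 0) (by omega)
  have hcoeff : (taylor c p - p).coeff n ≠ 0 := by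
    rw [coeff_taylor_sub_self_of_natDegree_eq hp]
    exact mul_ne_zero (mul_ne_zero (by exact_mod_cast n.succ_ne_zero)
      (leadingCoeff_ne_zero.2 hp0)) hc
  have hlt : (taylor c p - p).natDegree < (taylor c p).natDegree :=
    natDegree_lt_natDegree (fun h => hcoeff (by rw [h, coeff_zero])) <|
      degree_sub_lt_left (degree_taylor p c) ((taylor_eq_zero c p).not.2 hp0)
        (leadingCoeff_taylor c p)
  rw [natDegree_taylor] at hlt
  exact natDegree_eq_of_le_of_coeff_ne_zero (by omega) hcoeff

lemma natDegree_taylor_sub_taylor {p : R[X]} {n : ℕ} (hp : p.natDegree = n + 1) {a b : R}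
    (hab : a ≠ b) : (taylor a p - taylor b p).natDegree = n := by
  rw [← sub_add_cancel a b, ← taylor_taylor]
  exact natDegree_taylor_sub_self (by rwa [natDegree_taylor]) (sub_ne_zero.2 hab)

end Polynomial

section AdditiveCharacter

open Polynomial

variable {F : Type*} [Field F] {χ : F → ℂ}

lemma map_sub_eq_mul_conj (hhom : ∀ a b, χ (a + b) = χ a * χ b) (hmod : ∀ a, ‖χ a‖ = 1)
    (x y : F) : χ (x - y) = χ x * conj (χ y) := by
  have hy : χ y ≠ 0 := norm_ne_zero_iff.1 (by rw [hmod]; exact one_ne_zero)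
  rw [← RCLike.inv_eq_conj (hmod y), eq_mul_inv_iff_mul_eq₀ hy, ← hhom, sub_add_cancel]

variable [DecidableEq F] {Φ : ℕ → Finset F}

lemma tendsto_expect_comp_eval_of_natDegree_eq_one (hΦ : IsFolner Φ)
    (hhom : ∀ a b, χ (a + b) = χ a * χ b) (hmod : ∀ a, ‖χ a‖ = 1) (hnontriv : ∃ g, χ g ≠ 1)
    {p : F[X]} (hp : p.natDegree = 1) :
    Tendsto (fun N => 𝔼 x ∈ Φ N, χ (p.eval x)) atTop (𝓝 0) := by
  obtain ⟨g, hg⟩ := hnontriv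
  have ha : p.coeff 1 ≠ 0 := by
    rw [← hp, coeff_natDegree, leadingCoeff_ne_zero]
    rintro rfl
    simp at hp
  set a := p.coeff 1
  have hlin : p = C a * X + C (p.coeff 0) := eq_X_add_C_of_natDegree_le_one hp.le
  refine hΦ.tendsto_expect_of_shift_eq_mul (fun x => (hmod _).le) hg (g := a⁻¹ * g) fun x => ?_
  have hshift : p.eval (x + a⁻¹ * g) = g + p.eval x := by
    rw [hlin]
    simp only [eval_add, eval_mul, eval_C, eval_X]
    field_simp
    ring
  rw [hshift, hhom]

theorem tendsto_expect_comp_eval [CharZero F] (hΦ : IsFolner Φ)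
    (hhom : ∀ a b, χ (a + b) = χ a * χ b) (hmod : ∀ a, ‖χ a‖ = 1) (hnontriv : ∃ g, χ g ≠ 1) :
    ∀ n {p : F[X]}, p.natDegree = n + 1 →
      Tendsto (fun N => 𝔼 x ∈ Φ N, χ (p.eval x)) atTop (𝓝 0)
  | 0, _, hp => tendsto_expect_comp_eval_of_natDegree_eq_one hΦ hhom hmod hnontriv hp
  | n + 1, p, hp => hΦ.tendsto_expect_of_tendsto_expect_mul_conj (fun x => (hmod _).le)
      fun h h' hne => by
        simp_rw [← map_sub_eq_mul_conj hhom hmod, ← taylor_eval, ← eval_sub]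
        exact tendsto_expect_comp_eval hΦ hhom hmod hnontriv n (natDegree_taylor_sub_taylor hp hne)

end AdditiveCharacter

theorem stmt4_general {F : Type*} [Field F] [CharZero F] [DecidableEq F]
    (χ : F → ℂ) (hhom : ∀ a b, χ (a + b) = χ a * χ b) (hmod : ∀ a, ‖χ a‖ = 1)
    (hnontriv : ∃ g, χ g ≠ 1)
    (p : Polynomial F) (hp : 0 < p.natDegree)
    (Φ : ℕ → Finset F) (hΦ : IsFolner Φ) :
    Tendsto (fun N => (∑ n ∈ Φ N, χ (p.eval n)) / ((Φ N).card : ℂ)) atTop (nhds 0) := by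
  obtain ⟨n, hn⟩ := Nat.exists_eq_add_one_of_ne_zero hp.ne'
  simpa only [expect_eq_sum_div_card] using tendsto_expect_comp_eval hΦ hhom hmod hnontriv n hn

/-- For a countable field `F` of characteristic zero, a non-trivial character `χ` of
`(F,+)`, and a non-constant polynomial `p ∈ F[x]`, the averages of `χ(p(n))` along
any Følner sequence converge to `0`. -/
theorem stmt4 {F : Type*} [Field F] [CharZero F] [Countable F] [DecidableEq F]
    (χ : F → ℂ) (hhom : ∀ a b, χ (a + b) = χ a * χ b) (hmod : ∀ a, ‖χ a‖ = 1)
    (hnontriv : ∃ g, χ g ≠ 1)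
    (p : Polynomial F) (hp : 0 < p.natDegree)
    (Φ : ℕ → Finset F) (hΦ : IsFolner Φ) :
    Tendsto (fun N => (∑ n ∈ Φ N, χ (p.eval n)) / ((Φ N).card : ℂ)) atTop (nhds 0) :=
  stmt4_general χ hhom hmod hnontriv p hp Φ hΦ
end

section
/- Let R be a countable integral domain, b ∈ R non-zero, r ∈ R, and let (Φ_N) be a Følner sequence in (R,+). Define A_N := {x ∈ R : b·x ∈ Φ_N − r}. If the ideal (b) has finite index in R, then (A_N) is a Følner sequence in (R,+). -/
open Filter Finset

/-! The map `x ↦ b * x + r` is injective and carries `A_N` onto the part of `Φ_N` lying in the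
coset `r + (b)`, and carries the translate `g + A_N` into `b * g + Φ_N`, so
`|A_N Δ (g + A_N)| ≤ |Φ_N Δ (b g + Φ_N)|`. It remains to see that `A_N` is not too small: translating
by a representative `t` of `q - r` moves `Φ_N ∩ (r + (b))` onto a set that differs from `Φ_N ∩ q` by at
most `|Φ_N Δ (t + Φ_N)|`, so summing over the `m` cosets `q` gives
`|Φ_N| ≤ m |A_N| + o(|Φ_N|)`, hence `|Φ_N| ≤ 2 m |A_N|` for large `N`. -/

theorem Finset.card_symmDiff_le_of_injective {α β : Type*} [DecidableEq α] [DecidableEq β]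
    {e : α → β} (he : Function.Injective e) {A B : Finset α} {S T : Finset β}
    (hA : ∀ x, x ∈ A ↔ e x ∈ S) (hB : ∀ x, x ∈ B ↔ e x ∈ T) :
    (symmDiff A B).card ≤ (symmDiff S T).card := by
  refine card_le_card_of_injOn e (fun x hx => ?_) he.injOn
  simp only [coe_symmDiff, Set.mem_symmDiff, mem_coe, hA, hB] at hx ⊢
  exact hx

section Cosets

variable {G : Type*} [AddCommGroup G] [DecidableEq G] (H : AddSubgroup G) [DecidableEq (G ⧸ H)]

theorem card_filter_coset_le (Φ : Finset G) (g : G) (q : G ⧸ H) :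
    (Φ.filter (fun x : G => (x : G ⧸ H) = g + q)).card ≤
      (Φ.filter (fun x : G => (x : G ⧸ H) = q)).card + (symmDiff Φ (Φ.image (g + ·))).card := by
  have htranslate : (Φ.image (g + ·)).filter (fun x : G => (x : G ⧸ H) = g + q) =
      (Φ.filter (fun x : G => (x : G ⧸ H) = q)).image (g + ·) := by
    rw [filter_image]
    congr 1
    exact filter_congr fun x _ => by simp
  calc (Φ.filter (fun x : G => (x : G ⧸ H) = g + q)).card
      ≤ ((Φ.image (g + ·)).filter (fun x : G => (x : G ⧸ H) = g + q) ∪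
          symmDiff Φ (Φ.image (g + ·))).card := by
        refine card_le_card fun x hx => ?_
        rw [mem_filter] at hx
        by_cases hxt : x ∈ Φ.image (g + ·)
        · exact mem_union_left _ (mem_filter.mpr ⟨hxt, hx.2⟩)
        · exact mem_union_right _ (mem_symmDiff.mpr (Or.inl ⟨hx.1, hxt⟩))
    _ ≤ _ := by
        grw [card_union_le, htranslate, card_image_of_injective _ (add_right_injective g)]

variable [Fintype (G ⧸ H)]

theorem card_le_card_mul_card_filter_coset_add_sum (Φ : Finset G) (q : G ⧸ H) :
    Φ.card ≤ Fintype.card (G ⧸ H) * (Φ.filter (fun x : G => (x : G ⧸ H) = q)).card +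
      ∑ p : G ⧸ H, (symmDiff Φ (Φ.image ((p - q).out + ·))).card := by
  calc Φ.card = ∑ p : G ⧸ H, (Φ.filter (fun x : G => (x : G ⧸ H) = p)).card :=
        card_eq_sum_card_fiberwise fun x _ => mem_univ _
    _ ≤ ∑ p : G ⧸ H, ((Φ.filter (fun x : G => (x : G ⧸ H) = q)).card +
          (symmDiff Φ (Φ.image ((p - q).out + ·))).card) := by
        refine sum_le_sum fun p _ => ?_
        have hp : p = ((p - q).out : G ⧸ H) + q := by simp
        conv_lhs => rw [hp]
        exact card_filter_coset_le H Φ _ q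
    _ = _ := by rw [sum_add_distrib, sum_const, card_univ, smul_eq_mul]

theorem IsFolner.eventually_card_le_mul_card_filter_coset {Φ : ℕ → Finset G} (hΦ : IsFolner Φ)
    (q : G ⧸ H) : ∀ᶠ N in atTop, ((Φ N).card : ℝ) ≤
      2 * Fintype.card (G ⧸ H) * ((Φ N).filter (fun x : G => (x : G ⧸ H) = q)).card := by
  set D : ℕ → ℝ := fun N => ∑ p : G ⧸ H, ((symmDiff (Φ N) ((Φ N).image ((p - q).out + ·))).card)
  have hD : Tendsto (fun N => D N / (Φ N).card) atTop (nhds 0) := by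
    simpa only [D, sum_div, sum_const_zero] using
      tendsto_finsetSum univ fun p _ => hΦ.2 (p - q).out
  filter_upwards [hD.eventually (gt_mem_nhds one_half_pos)] with N hN
  have hpos : (0 : ℝ) < (Φ N).card := by exact_mod_cast (hΦ.1 N).card_pos
  have hcount : ((Φ N).card : ℝ) ≤ Fintype.card (G ⧸ H) *
      ((Φ N).filter (fun x : G => (x : G ⧸ H) = q)).card + D N := by
    simp only [D]
    exact_mod_cast card_le_card_mul_card_filter_coset_add_sum H (Φ N) q
  rw [div_lt_iff₀ hpos] at hN
  linarith

end Cosets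

theorem eventually_pos_of_le_mul {φ a : ℕ → ℕ} {C : ℝ} (hφ : ∀ N, 0 < φ N)
    (hφa : ∀ᶠ N in atTop, (φ N : ℝ) ≤ C * a N) : ∀ᶠ N in atTop, 0 < a N := by
  filter_upwards [hφa] with N hN
  refine Nat.pos_of_ne_zero fun h => ?_
  have hφN : (0 : ℝ) < φ N := by exact_mod_cast hφ N
  simp only [h, Nat.cast_zero, mul_zero] at hN
  linarith

theorem tendsto_div_zero_of_le_of_le_mul {s t a φ : ℕ → ℕ} (C : ℝ) (hst : ∀ N, s N ≤ t N)
    (hφ : ∀ N, 0 < φ N) (hφa : ∀ᶠ N in atTop, (φ N : ℝ) ≤ C * a N)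
    (ht : Tendsto (fun N => (t N : ℝ) / φ N) atTop (nhds 0)) :
    Tendsto (fun N => (s N : ℝ) / a N) atTop (nhds 0) := by
  refine squeeze_zero' (Eventually.of_forall fun N => by positivity) ?_
    (by simpa using ht.const_mul C)
  filter_upwards [hφa, eventually_pos_of_le_mul hφ hφa] with N hN haN
  have hφN : (0 : ℝ) < φ N := by exact_mod_cast hφ N
  have hs : (s N : ℝ) ≤ t N := by exact_mod_cast hst N
  rw [mul_div_assoc', div_le_div_iff₀ (by exact_mod_cast haN) hφN]
  nlinarith

section AffinePreimage

variable {R : Type*} [CommRing R] [DecidableEq R] {b : R} (hb : IsLeftRegular b) (r : R)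
  {Φ A : Finset R} (hA : ∀ x, x ∈ A ↔ b * x + r ∈ Φ)
include hb hA

theorem card_eq_card_filter_coset_of_mem_iff
    [DecidableEq (R ⧸ (Ideal.span {b}).toAddSubgroup)] :
    A.card = (Φ.filter fun y : R => (y : R ⧸ (Ideal.span {b}).toAddSubgroup) = r).card := by
  rw [← card_image_of_injective A ((add_left_injective r).comp hb)]
  congr 1
  ext y
  simp only [mem_image, mem_filter, QuotientAddGroup.eq_iff_sub_mem,
    Submodule.mem_toAddSubgroup, Ideal.mem_span_singleton, Function.comp_apply]
  constructor
  · rintro ⟨x, hx, rfl⟩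
    exact ⟨(hA x).mp hx, ⟨x, by ring⟩⟩
  · rintro ⟨hy, x, hx⟩
    have hxy : b * x + r = y := by rw [← hx]; ring
    exact ⟨x, (hA x).mpr (hxy ▸ hy), hxy⟩

theorem card_symmDiff_image_add_le_of_mem_iff (g : R) :
    (symmDiff A (A.image (g + ·))).card ≤ (symmDiff Φ (Φ.image (b * g + ·))).card := by
  refine card_symmDiff_le_of_injective ((add_left_injective r).comp hb) hA fun x => ?_
  simp only [image_add_left, mem_preimage, hA, Function.comp_apply]
  ring_nf

end AffinePreimage

theorem stmt8_general {R : Type*} [CommRing R] [IsDomain R] [DecidableEq R]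
    (b : R) (hb : b ≠ 0) (r : R)
    (hfin : (Submodule.toAddSubgroup (Ideal.span {b})).FiniteIndex)
    (Φ : ℕ → Finset R) (hΦ : IsFolner Φ)
    (A : ℕ → Finset R) (hA : ∀ N, ∀ x : R, x ∈ A N ↔ b * x + r ∈ Φ N) :
    (∀ᶠ N in atTop, (A N).Nonempty) ∧
    ∀ g : R, Tendsto
      (fun N => ((symmDiff (A N) ((A N).image (fun x => g + x))).card : ℝ) / (A N).card)
      atTop (nhds 0) := by
  classical
  set H := Submodule.toAddSubgroup (Ideal.span {b})
  have : Fintype (R ⧸ H) := @Fintype.ofFinite _ H.finite_quotient_of_finiteIndex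
  have hreg : IsLeftRegular b := (IsRegular.of_ne_zero hb).left
  have hdense : ∀ᶠ N in atTop, ((Φ N).card : ℝ) ≤ 2 * Fintype.card (R ⧸ H) * (A N).card := by
    simpa only [card_eq_card_filter_coset_of_mem_iff hreg r (hA _)] using
      hΦ.eventually_card_le_mul_card_filter_coset H r
  have hΦpos : ∀ N, 0 < (Φ N).card := fun N => (hΦ.1 N).card_pos
  exact ⟨(eventually_pos_of_le_mul hΦpos hdense).mono fun N => card_pos.mp,
    fun g => tendsto_div_zero_of_le_of_le_mul _
      (fun N => card_symmDiff_image_add_le_of_mem_iff hreg r (hA N) g) hΦpos hdense (hΦ.2 (b * g))⟩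

/-- Let `R` be a countable integral domain, `b ≠ 0` with the ideal `(b)` of finite
additive index, `r ∈ R`, and `(Φ_N)` a Følner sequence in `(R,+)`. Then the sets
`A_N = {x : b·x ∈ Φ_N − r}` form a Følner sequence: they are eventually nonempty and
satisfy the Følner condition. -/
theorem stmt8 {R : Type*} [CommRing R] [IsDomain R] [Countable R] [DecidableEq R]
    (b : R) (hb : b ≠ 0) (r : R)
    (hfin : (Submodule.toAddSubgroup (Ideal.span {b})).FiniteIndex)
    (Φ : ℕ → Finset R) (hΦ : IsFolner Φ)
    (A : ℕ → Finset R) (hA : ∀ N, ∀ x : R, x ∈ A N ↔ b * x + r ∈ Φ N) :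
    (∀ᶠ N in atTop, (A N).Nonempty) ∧
    ∀ g : R, Tendsto
      (fun N => ((symmDiff (A N) ((A N).image (fun x => g + x))).card : ℝ) / (A N).card)
      atTop (nhds 0) :=
  stmt8_general b hb r hfin Φ hΦ A hA
end

section
/- Let R be a ring of characteristic zero and suppose an ergodic measure-preserving R-action (T_n)_{n ∈ R} on a probability space (X,μ) admits a non-constant function g : X → S¹ and a character χ : (R,+) → S¹ taking values in a finite set of roots of unity such that T_n g = χ(n) g for all n ∈ R. Then there exists a natural number a ≥ 1 such that χ(a·n) = 1 for all n ∈ R, and consequently for any Følner sequence (Φ_N) in (R,+), lim_N (1/|Φ_N|) ∑_{n ∈ Φ_N} T_{a n} g = g in L²(μ), while ∫_X g dμ = 0; hence the action does not satisfy the joint-ergodicity property (**) for the polynomial p(n) = a·n. -/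
open Filter Finset MeasureTheory

/-!
A character with finitely many values, all roots of unity, is killed by the product `a` of
their orders, so `T_{an} g = g` a.e. for every `n` and the averages of `T_{an} g` are `g` itself.
On the other hand `χ` is not trivial, since otherwise `g` would be invariant and hence constant
by ergodicity; and `∫ g = ∫ T_{n₀} g = χ(n₀) ∫ g` with `χ(n₀) ≠ 1` forces `∫ g = 0`.
-/

theorem AddChar.exists_nsmul_eq_one_of_finite_range {A M : Type*} [AddMonoid A] [CommMonoid M]
    (ψ : AddChar A M) (hfin : (Set.range ψ).Finite) (htors : ∀ n, IsOfFinOrder (ψ n)) :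
    ∃ a : ℕ, 0 < a ∧ ∀ n, ψ (a • n) = 1 := by
  refine ⟨∏ z ∈ hfin.toFinset, orderOf z,
    Finset.prod_pos fun z hz => ?_, fun n => ?_⟩
  · obtain ⟨n, rfl⟩ := hfin.mem_toFinset.mp hz
    exact (htors n).orderOf_pos
  · rw [ψ.map_nsmul_eq_pow, ← orderOf_dvd_iff_pow_eq_one]
    exact Finset.dvd_prod_of_mem _ (hfin.mem_toFinset.mpr ⟨n, rfl⟩)

section ErgodicAction

variable {G X : Type*} [AddGroup G] {T : G → X → X}

theorem preimage_iInter_preimage_eq (hTadd : ∀ n m x, T (n + m) x = T n (T m x))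
    (s : Set X) (m : G) : T m ⁻¹' ⋂ n, T n ⁻¹' s = ⋂ n, T n ⁻¹' s := by
  ext x
  simp only [Set.mem_preimage, Set.mem_iInter, ← hTadd]
  exact (Equiv.addRight m).forall_congr fun _ => Iff.rfl

variable [Countable G] [MeasurableSpace X] {μ : Measure X}

theorem measure_eq_zero_or_one_of_ae_invariant (hT : ∀ n, Measurable (T n))
    (hTadd : ∀ n m x, T (n + m) x = T n (T m x))
    (herg : ∀ s : Set X, MeasurableSet s → (∀ n, T n ⁻¹' s = s) → μ s = 0 ∨ μ s = 1)
    {s : Set X} (hs : MeasurableSet s) (hinv : ∀ n, T n ⁻¹' s =ᵐ[μ] s) :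
    μ s = 0 ∨ μ s = 1 := by
  have hcore : ⋂ n, T n ⁻¹' s =ᵐ[μ] s := by
    simpa only [Set.iInter_const] using Filter.EventuallyEq.countable_iInter hinv
  rw [← measure_congr hcore]
  exact herg _ (.iInter fun n => hs.preimage (hT n)) (preimage_iInter_preimage_eq hTadd s)

theorem exists_ae_eq_const_of_ae_invariant [IsProbabilityMeasure μ] {Y : Type*}
    [MeasurableSpace Y] [Nonempty Y] [MeasurableSpace.CountablySeparated Y]
    (hT : ∀ n, Measurable (T n)) (hTadd : ∀ n m x, T (n + m) x = T n (T m x))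
    (herg : ∀ s : Set X, MeasurableSet s → (∀ n, T n ⁻¹' s = s) → μ s = 0 ∨ μ s = 1)
    {f : X → Y} (hf : Measurable f) (hinv : ∀ n, f ∘ T n =ᵐ[μ] f) :
    ∃ c, f =ᵐ[μ] Function.const X c := by
  refine exists_eventuallyEq_const_of_forall_separating MeasurableSet fun U hU => ?_
  have hpre : ∀ n, T n ⁻¹' (f ⁻¹' U) =ᵐ[μ] f ⁻¹' U := fun n =>
    (hinv n).mono fun x hx => congrArg (· ∈ U) hx
  rcases measure_eq_zero_or_one_of_ae_invariant hT hTadd herg (hf hU) hpre with h0 | h1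
  · exact .inr (measure_eq_zero_iff_ae_notMem.mp h0)
  · refine .inl ((ae_iff_measure_eq (hf hU).nullMeasurableSet).mpr ?_)
    rwa [measure_univ]

end ErgodicAction

theorem integral_eq_zero_of_comp_ae_eq_smul {X E : Type*} [MeasurableSpace X] {μ : Measure X}
    [NormedAddCommGroup E] [NormedSpace ℂ E] {f : X → X} (hf : MeasurePreserving f μ μ)
    {g : X → E} (hg : AEStronglyMeasurable g μ) {c : ℂ} (hc : c ≠ 1)
    (heig : (fun x => g (f x)) =ᵐ[μ] fun x => c • g x) :
    ∫ x, g x ∂μ = 0 := by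
  have hfix : c • ∫ x, g x ∂μ = ∫ x, g x ∂μ := by
    rw [← integral_smul, ← integral_congr_ae heig,
      ← integral_map hf.measurable.aemeasurable (hf.map_eq.symm ▸ hg), hf.map_eq]
  have : (c - 1) • ∫ x, g x ∂μ = 0 := by rw [sub_smul, one_smul, hfix, sub_self]
  exact (smul_eq_zero.mp this).resolve_left (sub_ne_zero.mpr hc)

theorem ae_sum_div_card_eq_of_ae_invariant {ι X K : Type*} [MeasurableSpace X] {μ : Measure X}
    [Field K] [CharZero K] {s : Finset ι} (hs : s.Nonempty) {F : ι → X → X} {g : X → K}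
    (hinv : ∀ i ∈ s, (fun x => g (F i x)) =ᵐ[μ] g) :
    (fun x => (∑ i ∈ s, g (F i x)) / s.card) =ᵐ[μ] g := by
  filter_upwards [(eventually_all_finset s).mpr hinv] with x hx
  rw [Finset.sum_congr rfl hx, Finset.sum_const, nsmul_eq_mul,
    mul_div_cancel_left₀ _ (Nat.cast_ne_zero.mpr hs.card_pos.ne')]

theorem stmt12_general {R X : Type*} [Ring R] [Countable R] [DecidableEq R]
    [MeasurableSpace X] (μ : Measure X) [IsProbabilityMeasure μ]
    (T : R → X → X) (hT : ∀ n, MeasurePreserving (T n) μ μ)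
    (hTadd : ∀ n m x, T (n + m) x = T n (T m x))
    (herg : ∀ s : Set X, MeasurableSet s → (∀ n, T n ⁻¹' s = s) → μ s = 0 ∨ μ s = 1)
    (g : X → ℂ) (hgm : Measurable g)
    (hgnc : ¬ ∃ c : ℂ, g =ᵐ[μ] fun _ => c)
    (χ : R → ℂ) (hhom : ∀ a b, χ (a + b) = χ a * χ b)
    (hfin : (Set.range χ).Finite) (hru : ∀ n, ∃ m : ℕ, 1 ≤ m ∧ χ n ^ m = 1)
    (heig : ∀ n, (fun x => g (T n x)) =ᵐ[μ] fun x => χ n * g x) :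
    ∃ a : ℕ, 1 ≤ a ∧ (∀ n : R, χ ((a : R) * n) = 1) ∧
      (∫ x, g x ∂μ = 0) ∧
      ∀ Φ : ℕ → Finset R, IsFolner Φ →
        Tendsto (fun N => ∫ x,
            ‖(∑ n ∈ Φ N, g (T ((a : R) * n) x)) / ((Φ N).card : ℂ) - g x‖ ^ 2 ∂μ)
          atTop (nhds 0) := by
  have htors : ∀ n, IsOfFinOrder (χ n) := fun n =>
    isOfFinOrder_iff_pow_eq_one.mpr (hru n)
  have hχ0 : χ 0 = 1 :=
    (IsIdempotentElem.iff_eq_one_of_isUnit (htors 0).isUnit).mp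
      (show χ 0 * χ 0 = χ 0 by rw [← hhom, add_zero])
  let ψ : AddChar R ℂ := ⟨χ, hχ0, hhom⟩
  obtain ⟨a, ha, hψa⟩ := ψ.exists_nsmul_eq_one_of_finite_range hfin htors
  have hχa : ∀ n : R, χ ((a : R) * n) = 1 := fun n => by
    rw [← nsmul_eq_mul]
    exact hψa n
  obtain ⟨n₀, hn₀⟩ : ∃ n₀, χ n₀ ≠ 1 := by
    by_contra! htriv
    exact hgnc <| exists_ae_eq_const_of_ae_invariant (fun n => (hT n).measurable) hTadd herg
      hgm fun n => (heig n).trans (.of_forall fun x => by simp [htriv n])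
  refine ⟨a, ha, hχa,
    integral_eq_zero_of_comp_ae_eq_smul (hT n₀) hgm.aestronglyMeasurable hn₀ (heig n₀),
    fun Φ hΦ => ?_⟩
  have hzero : ∀ N, ∫ x, ‖(∑ n ∈ Φ N, g (T ((a : R) * n) x)) / ((Φ N).card : ℂ) - g x‖ ^ 2 ∂μ
      = 0 := fun N => by
    have havg := ae_sum_div_card_eq_of_ae_invariant (hΦ.1 N) (F := fun n => T ((a : R) * n))
      fun n _ => (heig _).trans (.of_forall fun x => by simp [hχa n])
    exact integral_eq_zero_of_ae <| havg.mono fun x hx => by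
      dsimp only at hx
      simp [hx]
  simpa only [hzero] using tendsto_const_nhds

/-- If an ergodic action of a characteristic-zero ring `R` admits a non-constant
modulus-one eigenfunction `g` whose eigenvalue character `χ` takes values in a finite set
of roots of unity, then there is `a ≥ 1` with `χ(a·n) = 1` for all `n`, so the averages
`E_{n∈Φ_N} T_{an} g` converge to `g` in `L²(μ)` while `∫ g dμ = 0`; hence (**) fails for
`p(n) = a·n`. -/
theorem stmt12 {R X : Type*} [Ring R] [CharZero R] [Countable R] [DecidableEq R]
    [MeasurableSpace X] (μ : Measure X) [IsProbabilityMeasure μ]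
    (T : R → X → X) (hT : ∀ n, MeasurePreserving (T n) μ μ)
    (hT0 : ∀ x, T 0 x = x) (hTadd : ∀ n m x, T (n + m) x = T n (T m x))
    (herg : ∀ s : Set X, MeasurableSet s → (∀ n, T n ⁻¹' s = s) → μ s = 0 ∨ μ s = 1)
    (g : X → ℂ) (hgm : Measurable g) (hgmod : ∀ x, ‖g x‖ = 1)
    (hgnc : ¬ ∃ c : ℂ, g =ᵐ[μ] fun _ => c)
    (χ : R → ℂ) (hhom : ∀ a b, χ (a + b) = χ a * χ b)
    (hfin : (Set.range χ).Finite) (hru : ∀ n, ∃ m : ℕ, 1 ≤ m ∧ χ n ^ m = 1)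
    (heig : ∀ n, (fun x => g (T n x)) =ᵐ[μ] fun x => χ n * g x) :
    ∃ a : ℕ, 1 ≤ a ∧ (∀ n : R, χ ((a : R) * n) = 1) ∧
      (∫ x, g x ∂μ = 0) ∧
      ∀ Φ : ℕ → Finset R, IsFolner Φ →
        Tendsto (fun N => ∫ x,
            ‖(∑ n ∈ Φ N, g (T ((a : R) * n) x)) / ((Φ N).card : ℂ) - g x‖ ^ 2 ∂μ)
          atTop (nhds 0) :=
  stmt12_general μ T hT hTadd herg g hgm hgnc χ hhom hfin hru heig
end
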